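/- Every reduct C|L⁻ of C = C^{eq} to a countable (more generally, size ≤ λ) sublanguage admits an expansion to a reduct C|L* of the same size that is eq-closed (has uniform elimination of imaginaries). Consequently, for every infinite cardinal λ, the set of eq-closed reducts of size ≤ λ is a club in (R^λ_C, ≤_C). -/
import Mathlib


/-! Statement 16: Every reduct `C|L⁻` of `C = C^eq` to a sublanguage of size
≤ λ admits an expansion to a reduct `C|L*` of size ≤ λ that is eq-closed
(has uniform elimination of imaginaries); consequently, for every infinite
cardinal λ, the eq-closed reducts of size ≤ λ form a club in `(R^λ_C, ≤_C)`.

Abstract setting: `Φ` is the full language of `C^eq` (its symbols, among which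
are equivalence-relation symbols, with semantics `Erel`, and function symbols,
with semantics `Ffun` on tuples `Tup`); a reduct is a sublanguage `L' ⊆ Φ`. -/

universe u

section Club
variable {P : Type*} [PartialOrder P]

def IsSupOf (C : Set P) (a : P) : Prop :=
  (∀ c ∈ C, c ≤ a) ∧ ∀ b : P, (∀ c ∈ C, c ≤ b) → a ≤ b

def Unbdd (A : Set P) : Prop := ∀ p : P, ∃ a ∈ A, p ≤ a

def ClosedSet (A : Set P) : Prop :=
  ∀ C ⊆ A, IsChain (· ≤ ·) C → ∀ a : P, IsSupOf C a → a ∈ A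

def Club (A : Set P) : Prop := Unbdd A ∧ ClosedSet A
end Club

variable {M Φ Tup : Type u}

/-- The reduct `C|L'` is eq-closed: for every definable equivalence relation
`e ∈ L'` there is a definable function `f ∈ L'` with `f(ā) = f(b̄) ↔ e(ā,b̄)`. -/
def EqClosedSub (isEq isFn : Φ → Prop) (Erel : Φ → Tup → Tup → Prop)
    (Ffun : Φ → Tup → M) (L' : Set Φ) : Prop :=
  ∀ e ∈ L', isEq e →
    ∃ f ∈ L', isFn f ∧ ∀ a b : Tup, Ffun f a = Ffun f b ↔ Erel e a b

theorem eq_closed_reducts_club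
    (isEq isFn : Φ → Prop) (Erel : Φ → Tup → Tup → Prop) (Ffun : Φ → Tup → M)
    -- C = C^eq: uniform elimination of imaginaries in the full language
    (hfull : ∀ e : Φ, isEq e →
      ∃ f : Φ, isFn f ∧ ∀ a b : Tup, Ffun f a = Ffun f b ↔ Erel e a b)
    (lam : Cardinal.{u}) (hinf : Cardinal.aleph0 ≤ lam) :
    -- every small reduct expands to a small eq-closed reduct
    ((∀ L' : Set Φ, Cardinal.mk L' ≤ lam →
        ∃ Lstar : Set Φ, L' ⊆ Lstar ∧ Cardinal.mk Lstar ≤ lam ∧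
          EqClosedSub isEq isFn Erel Ffun Lstar) ∧
    -- hence the eq-closed reducts of size ≤ λ form a club
      Club {L : {L' : Set Φ // Cardinal.mk L' ≤ lam} |
        EqClosedSub isEq isFn Erel Ffun L.1}) := by
  classical
  -- choice of uniform witnesses
  have key : ∀ L' : Set Φ, Cardinal.mk L' ≤ lam →
      ∃ Lstar : Set Φ, L' ⊆ Lstar ∧ Cardinal.mk Lstar ≤ lam ∧
        EqClosedSub isEq isFn Erel Ffun Lstar := by
    intro L' hL'
    set F : Φ → Φ := fun e => if h : isEq e then (hfull e h).choose else e with hF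
    have hFspec : ∀ e, isEq e → isFn (F e) ∧
        ∀ a b : Tup, Ffun (F e) a = Ffun (F e) b ↔ Erel e a b := by
      intro e he
      simp only [hF, dif_pos he]
      exact (hfull e he).choose_spec
    set step : Set Φ → Set Φ := fun S => S ∪ F '' S with hstep
    refine ⟨⋃ n : ULift.{u} ℕ, step^[n.down] L', ?_, ?_, ?_⟩
    · exact Set.subset_iUnion (fun n : ULift.{u} ℕ => step^[n.down] L') ⟨0⟩
    · have hcard : ∀ n, Cardinal.mk (step^[n] L') ≤ lam := by
        intro n
        induction n with
        | zero => simpa using hL'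
        | succ n ih =>
          rw [Function.iterate_succ_apply']
          calc Cardinal.mk (step (step^[n] L'))
              ≤ Cardinal.mk (step^[n] L') + Cardinal.mk (F '' step^[n] L') :=
                Cardinal.mk_union_le _ _
            _ ≤ lam + lam := add_le_add ih ((Cardinal.mk_image_le).trans ih)
            _ = lam := Cardinal.add_eq_self hinf
      calc Cardinal.mk (⋃ n : ULift.{u} ℕ, step^[n.down] L')
          ≤ Cardinal.mk (ULift.{u} ℕ) * ⨆ n : ULift.{u} ℕ, Cardinal.mk (step^[n.down] L') :=
            Cardinal.mk_iUnion_le _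
        _ ≤ lam * lam := by
            apply mul_le_mul' (by simpa using hinf)
            exact ciSup_le' fun n => hcard n.down
        _ = lam := Cardinal.mul_eq_self hinf
    · intro e he heq
      obtain ⟨_, ⟨⟨n⟩, rfl⟩, hen⟩ := he
      refine ⟨F e, ?_, (hFspec e heq).1, (hFspec e heq).2⟩
      refine Set.mem_iUnion.2 ⟨⟨n + 1⟩, ?_⟩
      rw [Function.iterate_succ_apply']
      exact Or.inr ⟨e, hen, rfl⟩
  refine ⟨key, ?_, ?_⟩
  · -- unbounded
    intro p
    obtain ⟨Lstar, hsub, hcard, hec⟩ := key p.1 p.2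
    exact ⟨⟨Lstar, hcard⟩, hec, hsub⟩
  · -- closed
    intro C hCA hchain a ha
    set U : Set Φ := ⋃ c ∈ C, (c : {L' : Set Φ // Cardinal.mk L' ≤ lam}).1 with hU
    have hUa : U ⊆ a.1 := by
      intro x hx
      obtain ⟨_, ⟨c, rfl⟩, _, ⟨hc, rfl⟩, hxc⟩ := hx
      exact ha.1 c hc hxc
    have hUcard : Cardinal.mk U ≤ lam :=
      (Cardinal.mk_le_mk_of_subset hUa).trans a.2
    have haU : a.1 = U := by
      refine le_antisymm ?_ hUa
      exact ha.2 ⟨U, hUcard⟩ (fun c hc => Set.subset_biUnion_of_mem hc)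
    intro e he heq
    rw [haU] at he
    obtain ⟨_, ⟨c, rfl⟩, _, ⟨hc, rfl⟩, hec⟩ := he
    obtain ⟨f, hf, hfn, hspec⟩ := hCA hc e hec heq
    exact ⟨f, haU ▸ Set.mem_biUnion hc hf, hfn, hspec⟩
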